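/- Let κ ≥ 0, Λ > 0, λ > 0, and let V be the set of continuously differentiable functions φ : [−1,1] → ℝ with φ(−1) = φ(1) = 0. Define m(θ) = inf_{φ∈V} [ (κ/2)∫_{−1}^{1}(φ² + Λ²·(φ′)²) dr + ∫_{−1}^{1} √(φ² + λ²·(φ′)²) dr − θ∫_{−1}^{1} φ dr ]. Then the function θ ↦ m(θ) is non-increasing on [0, ∞). -/
import Mathlib


/-- The set `V` of admissible test functions: C¹ functions on `[−1,1]`
vanishing at `±1`. -/
def V : Set (ℝ → ℝ) := {φ | ContDiff ℝ 1 φ ∧ φ (-1) = 0 ∧ φ 1 = 0}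

/-- The functional `Φ_θ(φ) = E(φ) + Ψ_λ(φ) − θ∫φ`, with renormalized plastic free
energy `E(φ) = (κ/2)∫(φ² + Λ²(φ')²)` and dissipation `Ψ_λ(φ) = ∫√(φ² + λ²(φ')²)`. -/
noncomputable def Phi (κ Λ lam θ : ℝ) (φ : ℝ → ℝ) : ℝ :=
  (κ / 2) * (∫ r in (-1 : ℝ)..1, ((φ r) ^ 2 + Λ ^ 2 * (deriv φ r) ^ 2))
    + (∫ r in (-1 : ℝ)..1, Real.sqrt ((φ r) ^ 2 + lam ^ 2 * (deriv φ r) ^ 2))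
    - θ * ∫ r in (-1 : ℝ)..1, φ r

/-- The reduced functional `Φ̃_θ(φ) = Ψ_λ(φ) − θ∫φ`. -/
noncomputable def PhiTilde (lam θ : ℝ) (φ : ℝ → ℝ) : ℝ :=
  (∫ r in (-1 : ℝ)..1, Real.sqrt ((φ r) ^ 2 + lam ^ 2 * (deriv φ r) ^ 2))
    - θ * ∫ r in (-1 : ℝ)..1, φ r

/-- The stability indicator `m(θ) = inf_{φ ∈ V} Φ_θ(φ)` (valued in `EReal`, since the
infimum may a priori be `−∞`). -/
noncomputable def m (κ Λ lam θ : ℝ) : EReal :=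
  ⨅ φ : V, ((Phi κ Λ lam θ φ.1 : ℝ) : EReal)

/-- The reduced stability indicator `m̃(θ) = inf_{φ ∈ V} Φ̃_θ(φ)`. -/
noncomputable def mTilde (lam θ : ℝ) : EReal :=
  ⨅ φ : V, ((PhiTilde lam θ φ.1 : ℝ) : EReal)

/-- Lemma 4.2 of the paper: the stability indicator `θ ↦ m(θ)` is non-increasing
on `[0,∞)`. -/
theorem stability_indicator_antitone (κ Λ lam : ℝ)
    (hκ : 0 ≤ κ) (hΛ : 0 < Λ) (hlam : 0 < lam) :
    AntitoneOn (fun θ => m κ Λ lam θ) (Set.Ici 0) := by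
  intro θ₁ hθ₁ θ₂ hθ₂ h12
  simp only [m]
  refine le_iInf fun φ => ?_
  obtain ⟨φ, hφC, hφm, hφp⟩ := φ
  by_cases hI : (0 : ℝ) ≤ ∫ r in (-1 : ℝ)..1, φ r
  · -- use φ itself
    refine iInf_le_of_le ⟨φ, hφC, hφm, hφp⟩ ?_
    have : Phi κ Λ lam θ₂ φ ≤ Phi κ Λ lam θ₁ φ := by
      unfold Phi
      have : θ₁ * ∫ r in (-1 : ℝ)..1, φ r ≤ θ₂ * ∫ r in (-1 : ℝ)..1, φ r :=
        mul_le_mul_of_nonneg_right h12 hI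
      linarith
    exact_mod_cast EReal.coe_le_coe_iff.mpr this
  · -- use −φ
    push_neg at hI
    have hψV : (fun r => -φ r) ∈ V := ⟨hφC.neg, by simp [hφm], by simp [hφp]⟩
    refine iInf_le_of_le ⟨_, hψV⟩ ?_
    have hderiv : ∀ r, deriv (fun r => -φ r) r = -deriv φ r := fun r => deriv.neg
    have hInt : (∫ r in (-1 : ℝ)..1, (fun r => -φ r) r) = -(∫ r in (-1 : ℝ)..1, φ r) := by
      simp [intervalIntegral.integral_neg]
    have hkey : Phi κ Λ lam θ₂ (fun r => -φ r) ≤ Phi κ Λ lam θ₁ φ := by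
      unfold Phi
      have h1 : (∫ r in (-1 : ℝ)..1, (((fun r => -φ r) r) ^ 2
          + Λ ^ 2 * (deriv (fun r => -φ r) r) ^ 2))
          = ∫ r in (-1 : ℝ)..1, ((φ r) ^ 2 + Λ ^ 2 * (deriv φ r) ^ 2) := by
        refine intervalIntegral.integral_congr fun r _ => ?_
        simp [hderiv r]
      have h2 : (∫ r in (-1 : ℝ)..1, Real.sqrt (((fun r => -φ r) r) ^ 2
          + lam ^ 2 * (deriv (fun r => -φ r) r) ^ 2))
          = ∫ r in (-1 : ℝ)..1, Real.sqrt ((φ r) ^ 2 + lam ^ 2 * (deriv φ r) ^ 2) := by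
        refine intervalIntegral.integral_congr fun r _ => ?_
        simp [hderiv r]
      rw [h1, h2, hInt]
      have hθ₁' : (0:ℝ) ≤ θ₁ := hθ₁
      have hθ₂' : (0:ℝ) ≤ θ₂ := le_trans hθ₁ h12
      nlinarith [mul_le_mul_of_nonneg_right h12 (neg_nonneg.mpr hI.le)]
    exact_mod_cast EReal.coe_le_coe_iff.mpr hkey
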